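/- arXiv:0909.3642 — 6 statements merged into one kernel-verified Lean document; each statement's English description precedes it below -/
import Mathlib

section
/- Let (x_n)_{n≥3} be a sequence of positive reals with x_{n+1} < x_n, and set y_n = x_{n+1}/x_n and z_n = 1/(1-y_n). If the x_n satisfy (x_{n+1} - 2x_{n+2} + x_{n+3})(x_n - x_{n+1})/x_{n+1} = (x_{n+2} - x_{n+3})(x_n - 2x_{n+1} + x_{n+2})/x_{n+2} for all n ≥ 3, then z_n - 2z_{n+1} + z_{n+2} = 0 for all n ≥ 3, so z_n is affine in n. -/
/-- If a positive strictly decreasing sequence `(x_n)_{n ≥ 3}` satisfies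
`(x_{n+1} - 2x_{n+2} + x_{n+3})(x_n - x_{n+1})/x_{n+1}
  = (x_{n+2} - x_{n+3})(x_n - 2x_{n+1} + x_{n+2})/x_{n+2}`,
then, with `y_n = x_{n+1}/x_n` and `z_n = 1/(1-y_n)`, the sequence `z` satisfies
`z_n - 2 z_{n+1} + z_{n+2} = 0` for all `n ≥ 3` (hence is affine in `n`). -/
theorem z_second_diff_zero (x : ℕ → ℝ)
    (hpos : ∀ n, 3 ≤ n → 0 < x n)
    (hdec : ∀ n, 3 ≤ n → x (n + 1) < x n)
    (heq : ∀ n, 3 ≤ n →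
      (x (n + 1) - 2 * x (n + 2) + x (n + 3)) * (x n - x (n + 1)) / x (n + 1) =
        (x (n + 2) - x (n + 3)) * (x n - 2 * x (n + 1) + x (n + 2)) / x (n + 2)) :
    ∀ n, 3 ≤ n →
      (fun m => 1 / (1 - x (m + 1) / x m)) n
        - 2 * (fun m => 1 / (1 - x (m + 1) / x m)) (n + 1)
        + (fun m => 1 / (1 - x (m + 1) / x m)) (n + 2) = 0 := by
  intro n hn
  simp only
  have ha := hpos n hn
  have hb := hpos (n + 1) (by omega)
  have hc := hpos (n + 2) (by omega)
  have hd := hpos (n + 3) (by omega)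
  have hab := hdec n hn
  have hbc := hdec (n + 1) (by omega)
  have hcd := hdec (n + 2) (by omega)
  have e1 : n + 1 + 1 = n + 2 := rfl
  have e2 : n + 2 + 1 = n + 3 := rfl
  rw [e1] at hbc
  rw [e2] at hcd
  rw [e1, e2]
  have heqn := heq n hn
  have hb' : x (n + 1) ≠ 0 := ne_of_gt hb
  have hc' : x (n + 2) ≠ 0 := ne_of_gt hc
  have ha' : x n ≠ 0 := ne_of_gt ha
  have h1 : (1 : ℝ) - x (n + 1) / x n ≠ 0 := by
    have : x (n + 1) / x n < 1 := (div_lt_one ha).2 hab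
    linarith
  have h2 : (1 : ℝ) - x (n + 2) / x (n + 1) ≠ 0 := by
    have : x (n + 2) / x (n + 1) < 1 := (div_lt_one hb).2 hbc
    linarith
  have h3 : (1 : ℝ) - x (n + 3) / x (n + 2) ≠ 0 := by
    have : x (n + 3) / x (n + 2) < 1 := (div_lt_one hc).2 hcd
    linarith
  have d1 : x n - x (n + 1) ≠ 0 := by linarith
  have d2 : x (n + 1) - x (n + 2) ≠ 0 := by linarith
  have d3 : x (n + 2) - x (n + 3) ≠ 0 := by linarith
  have g1 : 1 / (1 - x (n + 1) / x n) = x n / (x n - x (n + 1)) := by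
    rw [one_sub_div ha', one_div_div]
  have g2 : 1 / (1 - x (n + 2) / x (n + 1)) = x (n + 1) / (x (n + 1) - x (n + 2)) := by
    rw [one_sub_div hb', one_div_div]
  have g3 : 1 / (1 - x (n + 3) / x (n + 2)) = x (n + 2) / (x (n + 2) - x (n + 3)) := by
    rw [one_sub_div hc', one_div_div]
  rw [g1, g2, g3]
  rw [div_eq_div_iff hb' hc'] at heqn
  field_simp
  linear_combination heqn
end

section
/- Fix 0 ≤ α < 1 and θ ≥ 0 with θ + α > 0. For every composition λ = (λ_1,...,λ_k) of n with k ≥ 2, the product p_{α,θ}(λ) · d_{α,θ}(λ;1) equals q(n,λ_1) · binomial(n,λ_1)^{-1} · p_{α,θ}(λ_2,...,λ_k), where q(n,m) = binomial(n,m) · (1-α)_{m-1}/(θ+n-m)_m · ((n-m)α + mθ)/n. -/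
/-!
Split off the first block `m = λ₁` of a composition of `n = m + t`. Since
`(θ+1)_{n-1} = (θ+1)_{t-1} (θ+t)_m`, the EPPF factors as
`p(λ) = (θ+(k-1)α) (1-α)_{m-1} / (θ+t)_m · p(λ₂,…,λ_k)`, and the denominator
`θ+α(k-1)` of `d(λ;1) = (θm+αt)/(n(θ+α(k-1)))` cancels the weight `θ+(k-1)α`, leaving
`(1-α)_{m-1}/(θ+t)_m · (tα+mθ)/n · p(λ₂,…,λ_k)`, which is `q(n,m) C(n,m)⁻¹ p(λ₂,…,λ_k)`.
-/

/-- Rising factorial `(x)_n = x (x+1) ⋯ (x+n-1)`. -/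
noncomputable def risingFac (x : ℝ) (n : ℕ) : ℝ := ∏ i ∈ Finset.range n, (x + i)

/-- The two-parameter EPPF `p_{α,θ}` on compositions with `k` parts. -/
noncomputable def eppf (α θ : ℝ) {k : ℕ} (lam : Fin k → ℕ) : ℝ :=
  (∏ i ∈ Finset.range (k - 1), (θ + (i + 1) * α)) /
      risingFac (θ + 1) ((∑ j, lam j) - 1) *
    ∏ j, risingFac (1 - α) (lam j - 1)

/-- The deletion kernel `d_{α,θ}(λ;j) = (θλ_j + α(n-λ_j))/(n(θ+α(k-1)))`. -/
noncomputable def delKernel (α θ : ℝ) {k : ℕ} (lam : Fin k → ℕ) (j : Fin k) : ℝ :=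
  (θ * lam j + α * (((∑ i, lam i : ℕ) : ℝ) - (lam j : ℕ))) /
    (((∑ i, lam i : ℕ) : ℝ) * (θ + α * ((k : ℝ) - 1)))

/-- The decrement probability
`q(n,m) = C(n,m) (1-α)_{m-1}/(θ+n-m)_m · ((n-m)α + mθ)/n`. -/
noncomputable def qdec (α θ : ℝ) (n m : ℕ) : ℝ :=
  (n.choose m : ℝ) * (risingFac (1 - α) (m - 1) / risingFac (θ + (n : ℝ) - m) m) *
    ((((n : ℝ) - m) * α + m * θ) / n)

lemma risingFac_add (x : ℝ) (a b : ℕ) :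
    risingFac x (a + b) = risingFac x a * risingFac (x + a) b := by
  unfold risingFac
  rw [Finset.prod_range_add]
  congr 1
  exact Finset.prod_congr rfl fun i _ => by push_cast; ring

lemma eppf_cons (α θ : ℝ) {k : ℕ} (m : ℕ) (μ : Fin (k + 1) → ℕ) (hμ : 0 < ∑ j, μ j) :
    eppf α θ (Fin.cons m μ : Fin (k + 2) → ℕ) =
      (θ + (k + 1) * α) * risingFac (1 - α) (m - 1) /
          risingFac (θ + ((∑ j, μ j : ℕ) : ℝ)) m * eppf α θ μ := by
  unfold eppf
  rw [Fin.sum_cons, Fin.prod_univ_succ]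
  simp only [Fin.cons_zero, Fin.cons_succ]
  set t := ∑ j, μ j
  have hfac : risingFac (θ + 1) (m + t - 1) =
      risingFac (θ + 1) (t - 1) * risingFac (θ + t) m := by
    rw [show m + t - 1 = t - 1 + m by omega, risingFac_add]
    congr 2
    push_cast [Nat.cast_sub (Nat.one_le_iff_ne_zero.mpr hμ.ne')]
    ring
  have hweights : ∏ i ∈ Finset.range (k + 1 + 1 - 1), (θ + (i + 1) * α) =
      (∏ i ∈ Finset.range (k + 1 - 1), (θ + (i + 1) * α)) * (θ + (k + 1) * α) := by
    simp [Finset.prod_range_succ]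
  rw [hfac, hweights]
  ring

lemma qdec_mul_inv_choose (α θ : ℝ) {n m : ℕ} (hmn : m ≤ n) :
    qdec α θ n m * ((n.choose m : ℕ) : ℝ)⁻¹ =
      risingFac (1 - α) (m - 1) / risingFac (θ + ((n - m : ℕ) : ℝ)) m *
        ((((n - m : ℕ) : ℝ) * α + m * θ) / n) := by
  have hchoose : ((n.choose m : ℕ) : ℝ) ≠ 0 := by
    exact_mod_cast (Nat.choose_pos hmn).ne'
  unfold qdec
  rw [Nat.cast_sub hmn, add_sub_assoc]
  field_simp

theorem eppf_regenerative_general (α θ : ℝ) (hα0 : 0 ≤ α)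
    (hθα : 0 < θ + α) (k : ℕ) (lam : Fin (k + 2) → ℕ) (hpos : ∀ j, 0 < lam j) :
    eppf α θ lam * delKernel α θ lam 0 =
      qdec α θ (∑ j, lam j) (lam 0) *
        ((((∑ j, lam j : ℕ)).choose (lam 0) : ℝ))⁻¹ *
        eppf α θ (Fin.tail lam) := by
  have hweight : θ + α * (((k + 2 : ℕ) : ℝ) - 1) ≠ 0 := by
    have : 0 ≤ α * k := by positivity
    push_cast
    linarith
  obtain ⟨m, μ, rfl⟩ : ∃ m μ, lam = Fin.cons m μ := ⟨_, _, (Fin.cons_self_tail lam).symm⟩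
  have hμ : 0 < ∑ j, μ j :=
    Finset.sum_pos (fun j _ => by simpa using hpos j.succ) Finset.univ_nonempty
  rw [eppf_cons α θ m μ hμ, qdec_mul_inv_choose α θ (by simp)]
  unfold delKernel
  simp only [Fin.sum_cons, Fin.cons_zero, Fin.tail_cons, Nat.add_sub_cancel_left]
  field_simp
  push_cast
  ring

/-- The `(α,θ)` EPPF is regenerative with respect to the kernel `d_{α,θ}`:
`p_{α,θ}(λ) d_{α,θ}(λ;1) = q(n,λ_1) C(n,λ_1)⁻¹ p_{α,θ}(λ_2,…,λ_k)` for any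
composition `λ` with at least two parts. -/
theorem eppf_regenerative (α θ : ℝ) (hα0 : 0 ≤ α) (hα1 : α < 1) (hθ0 : 0 ≤ θ)
    (hθα : 0 < θ + α) (k : ℕ) (lam : Fin (k + 2) → ℕ) (hpos : ∀ j, 0 < lam j) :
    eppf α θ lam * delKernel α θ lam 0 =
      qdec α θ (∑ j, lam j) (lam 0) *
        ((((∑ j, lam j : ℕ)).choose (lam 0) : ℝ))⁻¹ *
        eppf α θ (Fin.tail lam) :=
  eppf_regenerative_general α θ hα0 hθα k lam hpos
end

section
/- Let x_1,...,x_k be distinct positive reals and let σ be a size-biased random permutation of [k], i.e. P(σ = (i_1,...,i_k)) = ∏_{j=1}^{k} x_{i_j}/(x_{i_j} + x_{i_{j+1}} + ... + x_{i_k}). For j ∈ [k] let A_j be the event that x_j precedes x_ℓ in the permuted sequence for every j < ℓ ≤ k. Then the events A_1,...,A_k are mutually independent, with P(A_j) = x_j/(x_j + x_{j+1} + ... + x_k). -/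
/-!
Condition on the first entry `p` of the size-biased permutation: it is drawn with probability
`x p / ∑ x`, and what follows is a size-biased permutation of the remaining values, reindexed
monotonically by `p.succAbove`. The events `A_j, j ∈ S`, force `p ≤ min S`; given that, `A_p`
holds automatically and the other `A_j` become the same events for the remaining values, so by
induction the conditional probability is `∏_{j ∈ S \ {p}} P(A_j)`. Summing over `p ≤ m = min S`
leaves the identity `x_m / T + (∑_{p < m} x_p / T) · x_m / R_m = x_m / R_m`, where `T = R_0` and
`R_m = ∑_{ℓ ≥ m} x_ℓ`.
-/

open Finset

section

variable {k n : ℕ}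

lemma Fin.image_succAbove_Ici {p : Fin (n + 1)} {j : Fin n} (h : p < p.succAbove j) :
    (Ici j).image p.succAbove = Ici (p.succAbove j) := by
  ext ℓ
  simp only [mem_image, mem_Ici]
  constructor
  · rintro ⟨i, hi, rfl⟩
    exact Fin.succAbove_le_succAbove_iff.mpr hi
  · intro hℓ
    obtain ⟨i, rfl⟩ := Fin.exists_succAbove_eq (h.trans_le hℓ).ne'
    exact ⟨i, Fin.succAbove_le_succAbove_iff.mp hℓ, rfl⟩

def consPerm (p : Fin (n + 1)) (e : Equiv.Perm (Fin n)) : Equiv.Perm (Fin (n + 1)) :=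
  ((finSuccEquiv n).trans (Equiv.optionCongr e)).trans (finSuccEquiv' p).symm

@[simp]
lemma consPerm_zero (p : Fin (n + 1)) (e : Equiv.Perm (Fin n)) : consPerm p e 0 = p := by
  simp [consPerm]

@[simp]
lemma consPerm_succ (p : Fin (n + 1)) (e : Equiv.Perm (Fin n)) (i : Fin n) :
    consPerm p e i.succ = p.succAbove (e i) := by
  simp [consPerm]

@[simp]
lemma consPerm_symm_self (p : Fin (n + 1)) (e : Equiv.Perm (Fin n)) :
    (consPerm p e).symm p = 0 := by
  simp [consPerm, finSuccEquiv'_at, ← Equiv.optionCongr_symm, Equiv.optionCongr_apply]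

@[simp]
lemma consPerm_symm_succAbove (p : Fin (n + 1)) (e : Equiv.Perm (Fin n)) (i : Fin n) :
    (consPerm p e).symm (p.succAbove i) = (e.symm i).succ := by
  simp [consPerm, finSuccEquiv'_succAbove, ← Equiv.optionCongr_symm, Equiv.optionCongr_apply]

lemma consPerm_bijective :
    Function.Bijective fun pe : Fin (n + 1) × Equiv.Perm (Fin n) => consPerm pe.1 pe.2 := by
  rw [Fintype.bijective_iff_injective_and_card]
  refine ⟨fun ⟨p, e⟩ ⟨p', e'⟩ h => ?_, by simp [Fintype.card_perm, Nat.factorial_succ]⟩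
  obtain rfl : p = p' := by simpa using congr($h 0)
  obtain rfl : e = e' := Equiv.ext fun i => by simpa using congr($h i.succ)
  rfl

noncomputable def tailShare (x : Fin k → ℝ) (j : Fin k) : ℝ :=
  x j / ∑ ℓ ∈ Ici j, x ℓ

lemma tailShare_zero (x : Fin (n + 1) → ℝ) : tailShare x 0 = x 0 / ∑ i, x i := by
  rw [tailShare, show Ici (0 : Fin (n + 1)) = univ by ext; simp]

lemma tailShare_comp_succAbove (x : Fin (n + 1) → ℝ) {p : Fin (n + 1)} {j : Fin n}
    (h : p < p.succAbove j) : tailShare (x ∘ p.succAbove) j = tailShare x (p.succAbove j) := by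
  rw [tailShare, tailShare, ← Fin.image_succAbove_Ici h,
    sum_image fun _ _ _ _ hab => Fin.succAbove_right_injective hab]
  rfl

noncomputable def sizeBiasedWeight (x : Fin k → ℝ) (σ : Equiv.Perm (Fin k)) : ℝ :=
  ∏ j, tailShare (x ∘ σ) j

lemma sizeBiasedWeight_consPerm (x : Fin (n + 1) → ℝ) (p : Fin (n + 1))
    (e : Equiv.Perm (Fin n)) :
    sizeBiasedWeight x (consPerm p e) =
      (x p / ∑ i, x i) * sizeBiasedWeight (x ∘ p.succAbove) e := by
  rw [sizeBiasedWeight, Fin.prod_univ_succ, tailShare_zero]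
  congr 1
  · simp only [Function.comp_apply, consPerm_zero, Equiv.sum_comp]
  · refine prod_congr rfl fun j _ => ?_
    rw [← Fin.zero_succAbove, ← tailShare_comp_succAbove _ (Fin.succ_pos j)]
    congr 1

-- `σ j` is the index placed at position `j`, so `σ.symm i` is the position of `x i`.
def PrecedesLater (S : Finset (Fin k)) (σ : Equiv.Perm (Fin k)) : Prop :=
  ∀ j ∈ S, ∀ ℓ, j < ℓ → σ.symm j < σ.symm ℓ

instance (S : Finset (Fin k)) : DecidablePred (PrecedesLater S) := fun σ =>
  inferInstanceAs (Decidable (∀ j ∈ S, ∀ ℓ, j < ℓ → σ.symm j < σ.symm ℓ))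

lemma precedesLater_consPerm_iff (S : Finset (Fin (n + 1))) (p : Fin (n + 1))
    (e : Equiv.Perm (Fin n)) :
    PrecedesLater S (consPerm p e) ↔
      (∀ j ∈ S, p ≤ j) ∧ PrecedesLater (univ.filter (p.succAbove · ∈ S)) e := by
  simp only [PrecedesLater, mem_filter, mem_univ, true_and]
  constructor
  · intro H
    refine ⟨fun j hj => not_lt.mp fun hpj => ?_, fun j hj ℓ hjℓ => ?_⟩
    · simpa using H j hj p hpj
    · simpa using H _ hj (p.succAbove ℓ) (Fin.succAbove_lt_succAbove_iff.mpr hjℓ)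
  · rintro ⟨hp, he⟩ j hj ℓ hjℓ
    obtain ⟨ℓ, rfl⟩ := Fin.exists_succAbove_eq (((hp j hj).trans_lt hjℓ).ne' : ℓ ≠ p)
    rcases eq_or_ne j p with rfl | hjp
    · simp
    · obtain ⟨j, rfl⟩ := Fin.exists_succAbove_eq hjp
      simpa using he j hj ℓ (Fin.succAbove_lt_succAbove_iff.mp hjℓ)

lemma prod_tailShare_comp_succAbove (x : Fin (n + 1) → ℝ) {S : Finset (Fin (n + 1))}
    {p : Fin (n + 1)} (hp : ∀ j ∈ S, p ≤ j) :
    ∏ j ∈ univ.filter (p.succAbove · ∈ S), tailShare (x ∘ p.succAbove) j =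
      ∏ j ∈ S.erase p, tailShare x j := by
  have himage : (univ.filter (p.succAbove · ∈ S)).image p.succAbove = S.erase p := by
    ext j
    simp only [mem_image, mem_erase, mem_filter, mem_univ, true_and]
    constructor
    · rintro ⟨j, hj, rfl⟩
      exact ⟨Fin.succAbove_ne p j, hj⟩
    · rintro ⟨hjp, hj⟩
      obtain ⟨j, rfl⟩ := Fin.exists_succAbove_eq hjp
      exact ⟨j, hj, rfl⟩
  rw [← himage, prod_image fun _ _ _ _ hab => Fin.succAbove_right_injective hab]
  refine prod_congr rfl fun j hj => tailShare_comp_succAbove x ?_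
  exact (hp _ (mem_filter.mp hj).2).lt_of_ne (Fin.ne_succAbove p j)

lemma sum_lowerBound_mul_prod_erase_tailShare (x : Fin (n + 1) → ℝ)
    (hx : ∀ i, 0 < x i) (S : Finset (Fin (n + 1))) :
    ∑ p ∈ univ.filter (fun p => ∀ j ∈ S, p ≤ j),
        (x p / ∑ i, x i) * ∏ j ∈ S.erase p, tailShare x j =
      ∏ j ∈ S, tailShare x j := by
  have htotal : 0 < ∑ i, x i := sum_pos (fun i _ => hx i) univ_nonempty
  rcases S.eq_empty_or_nonempty with rfl | hS
  · simp [← sum_div, htotal.ne']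
  set m := S.min' hS
  have hmS : m ∈ S := S.min'_mem hS
  have hfilter : univ.filter (fun p => ∀ j ∈ S, p ≤ j) = insert m (Iio m) := by
    ext p
    simp [Iio_insert, m, le_min'_iff]
  have hbefore : ∀ p ∈ Iio m, (x p / ∑ i, x i) * ∏ j ∈ S.erase p, tailShare x j =
      (x p / ∑ i, x i) * (tailShare x m * ∏ j ∈ S.erase m, tailShare x j) := fun p hp => by
    rw [mul_prod_erase S _ hmS,
      erase_eq_of_notMem fun hpS => (mem_Iio.mp hp).not_ge (S.min'_le p hpS)]
  have htail : 0 < ∑ ℓ ∈ Ici m, x ℓ := sum_pos (fun i _ => hx i) nonempty_Ici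
  have hsplit : ∑ i, x i = ∑ p ∈ Iio m, x p + ∑ ℓ ∈ Ici m, x ℓ := by
    rw [← sum_union (disjoint_left.mpr fun a ha hb => (mem_Iio.mp ha).not_ge (mem_Ici.mp hb))]
    congr
    ext; simp [lt_or_ge]
  have hsplit_ne : ∑ p ∈ Iio m, x p + ∑ ℓ ∈ Ici m, x ℓ ≠ 0 := hsplit ▸ htotal.ne'
  rw [hfilter, sum_insert notMem_Iio_self, sum_congr rfl hbefore, ← sum_mul, ← sum_div,
    ← mul_prod_erase S _ hmS, hsplit, tailShare]
  field_simp
  ring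

theorem sum_sizeBiasedWeight_precedesLater (x : Fin k → ℝ) (hx : ∀ i, 0 < x i)
    (S : Finset (Fin k)) :
    ∑ σ ∈ univ.filter (PrecedesLater S), sizeBiasedWeight x σ = ∏ j ∈ S, tailShare x j := by
  induction k with
  | zero => simp [eq_empty_of_isEmpty S, sizeBiasedWeight, PrecedesLater, filter_singleton]
  | succ n ih =>
    have hfirst : ∀ p : Fin (n + 1),
        ∑ e, (if PrecedesLater S (consPerm p e) then sizeBiasedWeight x (consPerm p e) else 0) =
          if ∀ j ∈ S, p ≤ j then (x p / ∑ i, x i) * ∏ j ∈ S.erase p, tailShare x j else 0 := by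
      intro p
      simp only [precedesLater_consPerm_iff, sizeBiasedWeight_consPerm, ite_and]
      split_ifs with hp
      · rw [← sum_filter, ← mul_sum, ih (x ∘ p.succAbove) (fun i => hx _),
          prod_tailShare_comp_succAbove x hp]
      · exact sum_const_zero
    calc ∑ σ ∈ univ.filter (PrecedesLater S), sizeBiasedWeight x σ
        = ∑ p, ∑ e, if PrecedesLater S (consPerm p e) then sizeBiasedWeight x (consPerm p e)
            else 0 := by
          rw [sum_filter, ← Fintype.sum_prod_type']
          exact (Fintype.sum_bijective _ consPerm_bijective _ _ fun _ => rfl).symm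
      _ = ∑ p ∈ univ.filter (fun p => ∀ j ∈ S, p ≤ j),
            (x p / ∑ i, x i) * ∏ j ∈ S.erase p, tailShare x j := by
          rw [sum_filter]
          exact sum_congr rfl fun p _ => hfirst p
      _ = ∏ j ∈ S, tailShare x j := sum_lowerBound_mul_prod_erase_tailShare x hx S

end

-- Mutual independence with the stated marginals, as the product formula over every `S`.
theorem sizeBiased_records_independent_general (k : ℕ) (x : Fin k → ℝ)
    (hx : ∀ i, 0 < x i) (S : Finset (Fin k)) :
    ∑ σ ∈ Finset.univ.filter (fun σ : Equiv.Perm (Fin k) =>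
        ∀ j ∈ S, ∀ ℓ : Fin k, j < ℓ → σ.symm j < σ.symm ℓ),
      ∏ j : Fin k, x (σ j) / ∑ i ∈ Finset.Ici j, x (σ i) =
    ∏ j ∈ S, x j / ∑ ℓ ∈ Finset.Ici j, x ℓ :=
  sum_sizeBiasedWeight_precedesLater x hx S

/-- For a size-biased random permutation of distinct positive reals `x_1,…,x_k`
(the permutation `σ`, putting `x_{σ(1)},…,x_{σ(k)}` in a row, has probability
`∏_j x_{σ(j)}/(x_{σ(j)} + ⋯ + x_{σ(k)})`), the events
`A_j = {x_j precedes x_ℓ for all ℓ > j}` are mutually independent with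
`P(A_j) = x_j/(x_j + x_{j+1} + ⋯ + x_k)`.  Mutual independence together with the
individual probabilities is expressed by the product formula over every subset `S`. -/
theorem sizeBiased_records_independent (k : ℕ) (x : Fin k → ℝ)
    (hx : ∀ i, 0 < x i) (hdist : Function.Injective x) (S : Finset (Fin k)) :
    ∑ σ ∈ Finset.univ.filter (fun σ : Equiv.Perm (Fin k) =>
        ∀ j ∈ S, ∀ ℓ : Fin k, j < ℓ → σ.symm j < σ.symm ℓ),
      ∏ j : Fin k, x (σ j) / ∑ i ∈ Finset.Ici j, x (σ i) =
    ∏ j ∈ S, x j / ∑ ℓ ∈ Finset.Ici j, x ℓ :=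
  sizeBiased_records_independent_general k x hx S
end

section
/- Let X, Y, Z be random variables on a common probability space with values in measurable spaces, such that X is conditionally independent of Z given Y, and Y is conditionally independent of Z given X. If the joint law of (X,Y) has a strictly positive density with respect to some product probability measure μ⊗ν, then the pair (X,Y) is independent of Z. -/
/-!
Fix a measurable `B` and let `W = P⟦Z ∈ B | X, Y⟧`. Conditional independence of `X` and `Z`
given `Y` lets one drop `X` from the conditioning, so `W = P⟦Z ∈ B | Y⟧ = v (Y)` a.s.;
symmetrically `W = u (X)` a.s. Hence `u x = v y` almost everywhere for the law of `(X, Y)`,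
and, the density being positive, for `μ ⊗ ν`-almost every `(x, y)`. By Fubini `v` is then
`ν`-a.e. constant, so `W` is a.s. constant, which is the independence of `(X, Y)` and `Z`.
-/

open MeasureTheory ProbabilityTheory MeasurableSpace
open scoped ENNReal

section CondExp

variable {Ω : Type*}

lemma isPiSystem_image2_inter (m₁ m₂ : MeasurableSpace Ω) :
    IsPiSystem (Set.image2 (· ∩ ·) {s | MeasurableSet[m₁] s} {t | MeasurableSet[m₂] t}) := by
  rintro _ ⟨s, hs, t, ht, rfl⟩ _ ⟨s', hs', t', ht', rfl⟩ -
  refine ⟨s ∩ s', hs.inter hs', t ∩ t', ht.inter ht', ?_⟩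
  simp only [Set.inter_inter_inter_comm]

lemma sup_eq_generateFrom_image2_inter (m₁ m₂ : MeasurableSpace Ω) :
    m₁ ⊔ m₂ =
      generateFrom (Set.image2 (· ∩ ·) {s | MeasurableSet[m₁] s} {t | MeasurableSet[m₂] t}) := by
  refine le_antisymm (sup_le (fun s hs => ?_) (fun t ht => ?_)) (generateFrom_le ?_)
  · exact measurableSet_generateFrom ⟨s, hs, Set.univ, MeasurableSet.univ, Set.inter_univ s⟩
  · exact measurableSet_generateFrom ⟨Set.univ, MeasurableSet.univ, t, ht, Set.univ_inter t⟩
  · rintro _ ⟨s, hs, t, ht, rfl⟩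
    exact (le_sup_left (b := m₂) s hs).inter (le_sup_right (a := m₁) t ht)

variable {m m' m₁ m₂ : MeasurableSpace Ω} {mΩ : MeasurableSpace Ω} {μ : Measure Ω}

lemma setIntegral_eq_of_isPiSystem [IsFiniteMeasure μ] (hm : m ≤ mΩ)
    {C : Set (Set Ω)} (hC : IsPiSystem C) (hgen : m = generateFrom C) {f g : Ω → ℝ}
    (hf : Integrable f μ) (hg : Integrable g μ) (hf0 : 0 ≤ᵐ[μ] f) (hg0 : 0 ≤ᵐ[μ] g)
    (hfg : ∀ s ∈ C, ∫ x in s, f x ∂μ = ∫ x in s, g x ∂μ) (huniv : ∫ x, f x ∂μ = ∫ x, g x ∂μ)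
    {s : Set Ω} (hs : MeasurableSet[m] s) : ∫ x in s, f x ∂μ = ∫ x in s, g x ∂μ := by
  -- Nonnegativity turns both set integrals into finite measures `withDensity`, which agree on `C`.
  have hlintegral {h : Ω → ℝ} (hh : Integrable h μ) (hh0 : 0 ≤ᵐ[μ] h) (s : Set Ω) :
      μ.withDensity (fun x => ENNReal.ofReal (h x)) s = ENNReal.ofReal (∫ x in s, h x ∂μ) := by
    rw [withDensity_apply', ofReal_integral_eq_lintegral_ofReal hh.integrableOn
      (ae_restrict_of_ae hh0)]
  have : IsFiniteMeasure (μ.withDensity fun x => ENNReal.ofReal (f x)) :=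
    ⟨by rw [hlintegral hf hf0]; exact ENNReal.ofReal_lt_top⟩
  have hmeasure_eq := ext_on_measurableSpace_of_generate_finite mΩ C
    (μ := μ.withDensity fun x => ENNReal.ofReal (f x))
    (ν := μ.withDensity fun x => ENNReal.ofReal (g x))
    (fun s hs => by rw [hlintegral hf hf0, hlintegral hg hg0, hfg s hs]) hm hgen hC
    (by rw [hlintegral hf hf0, hlintegral hg hg0, Measure.restrict_univ, huniv]) hs
  rw [hlintegral hf hf0, hlintegral hg hg0] at hmeasure_eq
  exact (ENNReal.ofReal_eq_ofReal_iff (integral_nonneg_of_ae (ae_restrict_of_ae hf0))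
    (integral_nonneg_of_ae (ae_restrict_of_ae hg0))).mp hmeasure_eq

theorem CondIndep.condExp_indicator_sup_ae_eq [StandardBorelSpace Ω] [IsFiniteMeasure μ]
    {hm' : m' ≤ mΩ} (hm₁ : m₁ ≤ mΩ) (hm₂ : m₂ ≤ mΩ)
    (h : CondIndep m' m₁ m₂ hm' μ) {t : Set Ω} (ht : MeasurableSet[m₂] t) :
    μ⟦t | m₁ ⊔ m'⟧ =ᵐ[μ] μ⟦t | m'⟧ := by
  have hsup : m₁ ⊔ m' ≤ mΩ := sup_le hm₁ hm'
  have hind_int {s : Set Ω} (hs : MeasurableSet s) : Integrable (s.indicator fun _ => (1 : ℝ)) μ :=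
    (integrable_const 1).indicator hs
  have hind_nonneg (s : Set Ω) : 0 ≤ᵐ[μ] s.indicator fun _ => (1 : ℝ) :=
    ae_of_all _ (Set.indicator_nonneg fun _ _ => zero_le_one)
  -- On the generating rectangles `s ∩ u`, pull `μ⟦t | m'⟧` out and use conditional independence.
  have hrect : ∀ S ∈ Set.image2 (· ∩ ·) {s | MeasurableSet[m₁] s} {u | MeasurableSet[m'] u},
      ∫ x in S, (μ⟦t | m'⟧) x ∂μ = ∫ x in S, t.indicator (fun _ => (1 : ℝ)) x ∂μ := by
    rintro _ ⟨s, hs, u, hu, rfl⟩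
    have hsΩ : MeasurableSet s := hm₁ s hs
    have hmul : s.indicator (μ⟦t | m'⟧) = s.indicator (fun _ => (1 : ℝ)) * μ⟦t | m'⟧ := by
      ext x
      by_cases hx : x ∈ s <;> simp [hx]
    calc ∫ x in s ∩ u, (μ⟦t | m'⟧) x ∂μ
        = ∫ x in u, s.indicator (μ⟦t | m'⟧) x ∂μ := by
          rw [Set.inter_comm, setIntegral_indicator hsΩ]
      _ = ∫ x in u, (μ[s.indicator (μ⟦t | m'⟧) | m']) x ∂μ :=
          (setIntegral_condExp hm' (integrable_condExp.indicator hsΩ) hu).symm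
      _ = ∫ x in u, (μ⟦s | m'⟧ * μ⟦t | m'⟧) x ∂μ := by
          refine integral_congr_ae (ae_restrict_of_ae ?_)
          rw [hmul]
          exact condExp_mul_of_stronglyMeasurable_right stronglyMeasurable_condExp
            (hmul ▸ integrable_condExp.indicator hsΩ) (hind_int hsΩ)
      _ = ∫ x in u, (μ⟦s ∩ t | m'⟧) x ∂μ :=
          integral_congr_ae (ae_restrict_of_ae
            ((condIndep_iff m' m₁ m₂ hm' hm₁ hm₂ μ).1 h s t hs ht).symm)
      _ = ∫ x in u, (s ∩ t).indicator (fun _ => (1 : ℝ)) x ∂μ :=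
          setIntegral_condExp hm' (hind_int (hsΩ.inter (hm₂ t ht))) hu
      _ = ∫ x in s ∩ u, t.indicator (fun _ => (1 : ℝ)) x ∂μ := by
          rw [← Set.indicator_indicator, setIntegral_indicator hsΩ, Set.inter_comm]
  have hV_meas : StronglyMeasurable[m₁ ⊔ m'] (μ⟦t | m'⟧) :=
    stronglyMeasurable_condExp.mono le_sup_right
  refine (ae_eq_condExp_of_forall_setIntegral_eq hsup (hind_int (hm₂ t ht))
    (fun _ _ _ => integrable_condExp.integrableOn) (fun S hS _ => ?_)
    hV_meas.aestronglyMeasurable).symm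
  exact setIntegral_eq_of_isPiSystem hsup (isPiSystem_image2_inter m₁ m')
    (sup_eq_generateFrom_image2_inter m₁ m') integrable_condExp (hind_int (hm₂ t ht))
    (condExp_nonneg (hind_nonneg t)) (hind_nonneg t) hrect (integral_condExp hm') hS

theorem CondIndepFun.condExp_preimage_sup_ae_eq [StandardBorelSpace Ω] [IsFiniteMeasure μ]
    {hm' : m' ≤ mΩ} {β γ : Type*} [mβ : MeasurableSpace β] [mγ : MeasurableSpace γ]
    {X : Ω → β} {Z : Ω → γ} (hX : Measurable X) (hZ : Measurable Z)
    (h : CondIndepFun m' hm' X Z μ) {B : Set γ} (hB : MeasurableSet B) :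
    μ⟦Z ⁻¹' B | mβ.comap X ⊔ m'⟧ =ᵐ[μ] μ⟦Z ⁻¹' B | m'⟧ :=
  CondIndep.condExp_indicator_sup_ae_eq hX.comap_le hZ.comap_le
    ((condIndepFun_iff_condIndep _ _ X Z μ).1 h) ⟨B, hB, rfl⟩

lemma measure_inter_eq_mul_of_condExp_ae_eq_const [IsProbabilityMeasure μ] (hm : m ≤ mΩ)
    {s t : Set Ω} (hs : MeasurableSet[m] s) (ht : MeasurableSet t) {c : ℝ}
    (h : μ⟦t | m⟧ =ᵐ[μ] fun _ => c) :
    μ (s ∩ t) = μ s * μ t := by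
  have hsetIntegral {u : Set Ω} :
      ∫ x in u, t.indicator (fun _ => (1 : ℝ)) x ∂μ = μ.real (t ∩ u) := by
    rw [integral_indicator_const _ ht, smul_eq_mul, mul_one, measureReal_restrict_apply ht]
  have hc : c = μ.real t := by
    calc c = ∫ x, (μ⟦t | m⟧) x ∂μ := by simp [integral_congr_ae h]
      _ = μ.real t := by
        rw [integral_condExp hm, ← setIntegral_univ, hsetIntegral, Set.inter_univ]
  have hreal : μ.real (s ∩ t) = μ.real s * μ.real t :=
    calc μ.real (s ∩ t) = ∫ x in s, t.indicator (fun _ => (1 : ℝ)) x ∂μ := by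
          rw [hsetIntegral, Set.inter_comm]
      _ = ∫ x in s, (μ⟦t | m⟧) x ∂μ :=
          (setIntegral_condExp hm ((integrable_const 1).indicator ht) hs).symm
      _ = μ.real s * μ.real t := by
          rw [integral_congr_ae (ae_restrict_of_ae h), setIntegral_const, smul_eq_mul, hc]
  rwa [measureReal_def, measureReal_def, measureReal_def, ← ENNReal.toReal_mul,
    ENNReal.toReal_eq_toReal_iff' (measure_ne_top _ _)
      (ENNReal.mul_ne_top (measure_ne_top _ _) (measure_ne_top _ _))] at hreal

end CondExp

section Marginals

variable {Ω 𝒳 𝒴 : Type*} {mΩ : MeasurableSpace Ω} [MeasurableSpace 𝒳] [MeasurableSpace 𝒴]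
  {μ : Measure 𝒳} {ν : Measure 𝒴}

lemma exists_ae_eq_const_of_ae_prod_eq [NeZero μ] [SFinite ν] {β : Type*} {u : 𝒳 → β}
    {v : 𝒴 → β} (h : ∀ᵐ p ∂μ.prod ν, u p.1 = v p.2) : ∃ c, ∀ᵐ y ∂ν, v y = c := by
  obtain ⟨x, hx⟩ := (Measure.ae_ae_of_ae_prod h).exists
  exact ⟨u x, hx.mono fun _ hy => hy.symm⟩

lemma exists_comp_ae_eq_const_of_comp_ae_eq_comp [SFinite μ] [NeZero μ] [SFinite ν]
    {β : Type*} [MeasurableSpace β] [MeasurableEq β] {P : Measure Ω} {X : Ω → 𝒳} {Y : Ω → 𝒴}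
    (hX : Measurable X) (hY : Measurable Y)
    (hlaw : P.map (fun ω => (X ω, Y ω)) ≪ μ.prod ν)
    (hlaw' : μ.prod ν ≪ P.map (fun ω => (X ω, Y ω)))
    {u : 𝒳 → β} {v : 𝒴 → β} (hu : Measurable u) (hv : Measurable v) (h : u ∘ X =ᵐ[P] v ∘ Y) :
    ∃ c, v ∘ Y =ᵐ[P] fun _ => c := by
  have hprod : ∀ᵐ p ∂μ.prod ν, u p.1 = v p.2 :=
    hlaw'.ae_le <| (ae_map_iff (hX.prodMk hY).aemeasurable
      (measurableSet_eq_fun (hu.comp measurable_fst) (hv.comp measurable_snd))).2 h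
  obtain ⟨c, hc⟩ := exists_ae_eq_const_of_ae_prod_eq hprod
  have hlawY : P.map Y ≪ ν := by
    have hmap := hlaw.map measurable_snd
    rw [Measure.map_map measurable_snd (hX.prodMk hY), Measure.map_snd_prod] at hmap
    exact hmap.trans Measure.smul_absolutelyContinuous
  exact ⟨c, ae_of_ae_map hY.aemeasurable (hlawY.ae_le hc)⟩

end Marginals

theorem indep_of_double_condIndep_general
    {Ω 𝒳 𝒴 𝒵 : Type*} {mΩ : MeasurableSpace Ω}
    [StandardBorelSpace Ω]
    [MeasurableSpace 𝒳] [MeasurableSpace 𝒴] [MeasurableSpace 𝒵]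
    (P : Measure Ω) [IsProbabilityMeasure P]
    (X : Ω → 𝒳) (Y : Ω → 𝒴) (Z : Ω → 𝒵)
    (hX : Measurable X) (hY : Measurable Y) (hZ : Measurable Z)
    (hXZ : CondIndepFun (MeasurableSpace.comap Y inferInstance) hY.comap_le X Z P)
    (hYZ : CondIndepFun (MeasurableSpace.comap X inferInstance) hX.comap_le Y Z P)
    (μ : Measure 𝒳) (ν : Measure 𝒴)
    [IsProbabilityMeasure μ] [IsProbabilityMeasure ν]
    (f : 𝒳 × 𝒴 → ℝ≥0∞) (hf : Measurable f)
    (hfpos : ∀ᵐ xy ∂(μ.prod ν), 0 < f xy)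
    (hdens : Measure.map (fun ω => (X ω, Y ω)) P = (μ.prod ν).withDensity f) :
    IndepFun (fun ω => (X ω, Y ω)) Z P := by
  rw [indepFun_iff_measure_inter_preimage_eq_mul]
  intro s B hs hB
  have hcondExp_Y := CondIndepFun.condExp_preimage_sup_ae_eq hX hZ hXZ hB
  have hcondExp_X := CondIndepFun.condExp_preimage_sup_ae_eq hY hZ hYZ hB
  rw [sup_comm] at hcondExp_X
  obtain ⟨u, hu, hU⟩ := stronglyMeasurable_condExp.measurable.exists_eq_measurable_comp
    (f := X) (g := P⟦Z ⁻¹' B | MeasurableSpace.comap X inferInstance⟧)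
  obtain ⟨v, hv, hV⟩ := stronglyMeasurable_condExp.measurable.exists_eq_measurable_comp
    (f := Y) (g := P⟦Z ⁻¹' B | MeasurableSpace.comap Y inferInstance⟧)
  obtain ⟨c, hc⟩ := exists_comp_ae_eq_const_of_comp_ae_eq_comp hX hY
    (hdens ▸ withDensity_absolutelyContinuous _ f)
    (hdens ▸ withDensity_absolutelyContinuous' hf.aemeasurable (hfpos.mono fun _ h => h.ne'))
    hu hv (hU ▸ hV ▸ hcondExp_X.symm.trans hcondExp_Y)
  refine measure_inter_eq_mul_of_condExp_ae_eq_const (sup_le hX.comap_le hY.comap_le) ?_ (hZ hB)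
    (hcondExp_Y.trans (hV ▸ hc))
  rw [← MeasurableSpace.comap_prodMk]
  exact ⟨s, hs, rfl⟩

/-- If `X` is conditionally independent of `Z` given `Y`, and `Y` is conditionally
independent of `Z` given `X`, and the joint law of `(X,Y)` has a strictly positive
density with respect to some product probability measure `μ ⊗ ν`, then the pair
`(X,Y)` is independent of `Z`. -/
theorem indep_of_double_condIndep
    {Ω 𝒳 𝒴 𝒵 : Type*} {mΩ : MeasurableSpace Ω}
    [StandardBorelSpace Ω] [Nonempty Ω]
    [MeasurableSpace 𝒳] [MeasurableSpace 𝒴] [MeasurableSpace 𝒵]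
    (P : Measure Ω) [IsProbabilityMeasure P]
    (X : Ω → 𝒳) (Y : Ω → 𝒴) (Z : Ω → 𝒵)
    (hX : Measurable X) (hY : Measurable Y) (hZ : Measurable Z)
    (hXZ : CondIndepFun (MeasurableSpace.comap Y inferInstance) hY.comap_le X Z P)
    (hYZ : CondIndepFun (MeasurableSpace.comap X inferInstance) hX.comap_le Y Z P)
    (μ : Measure 𝒳) (ν : Measure 𝒴)
    [IsProbabilityMeasure μ] [IsProbabilityMeasure ν]
    (f : 𝒳 × 𝒴 → ℝ≥0∞) (hf : Measurable f)
    (hfpos : ∀ᵐ xy ∂(μ.prod ν), 0 < f xy)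
    (hdens : Measure.map (fun ω => (X ω, Y ω)) P = (μ.prod ν).withDensity f) :
    IndepFun (fun ω => (X ω, Y ω)) Z P :=
  indep_of_double_condIndep_general (mΩ := mΩ) P X Y Z hX hY hZ hXZ hYZ μ ν f hf hfpos hdens
end

section
/- Let P be a probability measure on a product space 𝒳 × 𝒴 with strictly positive density relative to a product probability measure μ⊗ν, and let p : 𝒳 × 𝒴 → [0,1] be jointly measurable such that p(x,y) = g(x) P-a.s. and p(x,y) = h(y) P-a.s. for some measurable g, h. Then p is P-a.s. equal to a constant. -/
open MeasureTheory
open scoped ENNReal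

/-- If `P` has a strictly positive density with respect to a product probability
measure `μ ⊗ ν` on `𝒳 × 𝒴`, and a jointly measurable `p : 𝒳 × 𝒴 → [0,1]` is
`P`-a.s. equal to a function of `x` alone and `P`-a.s. equal to a function of `y`
alone, then `p` is `P`-a.s. constant. -/
theorem const_of_two_factorizations
    {𝒳 𝒴 : Type*} [MeasurableSpace 𝒳] [MeasurableSpace 𝒴]
    (μ : Measure 𝒳) (ν : Measure 𝒴)
    [IsProbabilityMeasure μ] [IsProbabilityMeasure ν]
    (f : 𝒳 × 𝒴 → ℝ≥0∞) (hf : Measurable f)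
    (hfpos : ∀ᵐ xy ∂(μ.prod ν), 0 < f xy)
    (P : Measure (𝒳 × 𝒴)) [IsProbabilityMeasure P]
    (hP : P = (μ.prod ν).withDensity f)
    (p : 𝒳 × 𝒴 → ℝ) (hpm : Measurable p)
    (hp01 : ∀ xy, p xy ∈ Set.Icc (0 : ℝ) 1)
    (g : 𝒳 → ℝ) (hg : Measurable g)
    (h : 𝒴 → ℝ) (hh : Measurable h)
    (hpg : ∀ᵐ xy ∂P, p xy = g xy.1)
    (hph : ∀ᵐ xy ∂P, p xy = h xy.2) :
    ∃ c : ℝ, ∀ᵐ xy ∂P, p xy = c := by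
  have hQ : P ≪ μ.prod ν := hP ▸ withDensity_absolutelyContinuous _ f
  have key : ∀ {q : 𝒳 × 𝒴 → Prop}, (∀ᵐ xy ∂P, q xy) → ∀ᵐ xy ∂(μ.prod ν), q xy := by
    intro q hq
    rw [hP, ae_withDensity_iff hf] at hq
    filter_upwards [hq, hfpos] with xy h1 h2 using h1 h2.ne'
  have ghe : ∀ᵐ xy ∂(μ.prod ν), g xy.1 = h xy.2 := by
    filter_upwards [key hpg, key hph] with xy h1 h2 using h1 ▸ h2
  have ghe' : ∀ᵐ x ∂μ, ∀ᵐ y ∂ν, g x = h y := Measure.ae_ae_of_ae_prod ghe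
  have : (ae μ).NeBot := ae_neBot.mpr (IsProbabilityMeasure.ne_zero μ)
  obtain ⟨x₀, hx₀⟩ := ghe'.exists
  refine ⟨g x₀, ?_⟩
  have hνc : ν {y | ¬ h y = g x₀} = 0 := by
    have := hx₀
    rw [Filter.eventually_iff, mem_ae_iff] at this
    simpa [Set.compl_setOf, eq_comm] using this
  have hsnd : (μ.prod ν) {xy | ¬ h xy.2 = g x₀} = 0 := by
    have hset : {xy : 𝒳 × 𝒴 | ¬ h xy.2 = g x₀} = Set.univ ×ˢ {y | ¬ h y = g x₀} := by
      ext xy; simp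
    rw [hset, Measure.prod_prod, hνc, mul_zero]
  have hPc : ∀ᵐ xy ∂P, h xy.2 = g x₀ := by
    have : ∀ᵐ xy ∂(μ.prod ν), h xy.2 = g x₀ := by
      rw [Filter.eventually_iff, mem_ae_iff]
      simpa [Set.compl_setOf] using hsnd
    exact this.filter_mono hQ.ae_le
  filter_upwards [hph, hPc] with xy h1 h2 using h1 ▸ h2
end

section
/- Let W_1, W_2, ... be independent random variables with W_i distributed Beta(1-α, θ+iα) for parameters 0 ≤ α < 1, θ > -α, and define P_i = W_i ∏_{j<i}(1-W_j). Then for every composition λ = (λ_1,...,λ_k) of n, E[∏_{i=1}^{k} W_i^{λ_i - 1} (1-W_i)^{Λ_{i+1}}] = (∏_{i=1}^{k-1}(θ+iα))/(θ+1)_{n-1} · ∏_{j=1}^{k}(1-α)_{λ_j-1}, where Λ_j = λ_j + λ_{j+1} + ... + λ_k. -/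
/-! By independence the expectation is the product over `i` of the Beta moments
`E[W_i^p (1-W_i)^q] = (1-α)_p (θ+iα)_q / (θ+(i-1)α+1)_{p+q}`, the two Beta parameters adding up
to `θ+(i-1)α+1`. With `p = λ_i - 1` and `q = Λ_{i+1}` the denominator is `(θ+(i-1)α+1)_{Λ_i-1}`.
For `i < k` the numerator `(θ+iα)_{Λ_{i+1}} = (θ+iα)(θ+iα+1)_{Λ_{i+1}-1}` is `θ+iα` times the next
denominator, and `(θ+kα)_{Λ_{k+1}} = 1`, so the product telescopes to `∏_{i<k}(θ+iα) / (θ+1)_{n-1}`.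
The Beta moment holds because `x^p(1-x)^q` times the Beta(a,b) density is the Beta(a+p,b+q)
density up to a ratio of normalising constants, which `Γ(x+n) = Γ(x)(x)_n` turns into rising
factorials. -/

open MeasureTheory

/-- The Beta(a,b) distribution on `(0,1)` as a measure on `ℝ`. -/
noncomputable def betaMeas (a b : ℝ) : Measure ℝ :=
  (volume.restrict (Set.Ioo (0:ℝ) 1)).withDensity fun u =>
    ENNReal.ofReal (Real.Gamma (a + b) / (Real.Gamma a * Real.Gamma b) *
      u ^ (a - 1) * (1 - u) ^ (b - 1))

open ProbabilityTheory Finset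
open scoped ENNReal

@[simp] lemma risingFac_zero (x : ℝ) : risingFac x 0 = 1 := by simp [risingFac]

lemma risingFac_succ_left (x : ℝ) (n : ℕ) : risingFac x (n + 1) = x * risingFac (x + 1) n := by
  simp only [risingFac, prod_range_succ', Nat.cast_zero, add_zero, Nat.cast_succ]
  rw [mul_comm]
  congr 1
  exact prod_congr rfl fun i _ => by ring

lemma risingFac_pos {x : ℝ} (hx : 0 < x) (n : ℕ) : 0 < risingFac x n :=
  prod_pos fun i _ => by positivity

lemma Real.Gamma_add_nat_eq_mul_risingFac {x : ℝ} (hx : 0 < x) (n : ℕ) :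
    Real.Gamma (x + n) = Real.Gamma x * risingFac x n := by
  induction n with
  | zero => simp
  | succ n ih =>
    rw [Nat.cast_succ, ← add_assoc, Real.Gamma_add_one (by positivity), ih]
    simp only [risingFac, prod_range_succ]
    ring

lemma betaMeas_eq_betaMeasure (a b : ℝ) : betaMeas a b = betaMeasure a b := by
  rw [betaMeas, betaMeasure, ← withDensity_indicator measurableSet_Ioo]
  congr 1
  ext u
  simp only [betaPDF_eq, Set.indicator, Set.mem_Ioo, beta, one_div_div]
  split_ifs <;> simp

lemma betaPDFReal_nonneg {a b : ℝ} (ha : 0 < a) (hb : 0 < b) (x : ℝ) : 0 ≤ betaPDFReal a b x := by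
  by_cases hx : 0 < x ∧ x < 1
  · exact (betaPDFReal_pos hx.1 hx.2 ha hb).le
  · simp [betaPDFReal, hx]

lemma integral_betaPDFReal {a b : ℝ} (ha : 0 < a) (hb : 0 < b) :
    ∫ x, betaPDFReal a b x = 1 := by
  rw [integral_eq_lintegral_of_nonneg_ae (ae_of_all _ (betaPDFReal_nonneg ha hb))
    (stronglyMeasurable_betaPDFReal a b).aestronglyMeasurable]
  change (∫⁻ x, betaPDF a b x).toReal = 1
  rw [lintegral_betaPDF_eq_one ha hb, ENNReal.toReal_one]

lemma betaPDFReal_mul_pow_mul_one_sub_pow {a b : ℝ} (ha : 0 < a) (hb : 0 < b) (p q : ℕ) (x : ℝ) :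
    betaPDFReal a b x * (x ^ p * (1 - x) ^ q) =
      beta (a + p) (b + q) / beta a b * betaPDFReal (a + p) (b + q) x := by
  unfold betaPDFReal
  split_ifs with hx
  · have hβ := (beta_pos ha hb).ne'
    have hβ' := (beta_pos (by positivity : 0 < a + p) (by positivity : 0 < b + q)).ne'
    rw [add_sub_right_comm a, add_sub_right_comm b, Real.rpow_add_natCast hx.1.ne',
      Real.rpow_add_natCast (sub_pos.2 hx.2).ne']
    field_simp
  · simp

lemma integral_pow_mul_one_sub_pow_betaMeasure {a b : ℝ} (ha : 0 < a) (hb : 0 < b) (p q : ℕ) :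
    ∫ x, x ^ p * (1 - x) ^ q ∂betaMeasure a b = beta (a + p) (b + q) / beta a b := by
  have hpdf : betaPDF a b = fun x => ((betaPDFReal a b x).toNNReal : ℝ≥0∞) := rfl
  rw [betaMeasure, hpdf, integral_withDensity_eq_integral_smul (by fun_prop)]
  simp_rw [NNReal.smul_def, smul_eq_mul, Real.coe_toNNReal _ (betaPDFReal_nonneg ha hb _),
    betaPDFReal_mul_pow_mul_one_sub_pow ha hb]
  rw [integral_const_mul, integral_betaPDFReal (by positivity) (by positivity), mul_one]

lemma beta_add_nat_div_beta {a b : ℝ} (ha : 0 < a) (hb : 0 < b) (p q : ℕ) :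
    beta (a + p) (b + q) / beta a b =
      risingFac a p * risingFac b q / risingFac (a + b) (p + q) := by
  have hab : 0 < a + b := add_pos ha hb
  have := (risingFac_pos hab (p + q)).ne'
  have := (Real.Gamma_pos_of_pos ha).ne'
  have := (Real.Gamma_pos_of_pos hb).ne'
  have := (Real.Gamma_pos_of_pos hab).ne'
  rw [beta, beta, show a + p + (b + q) = a + b + ↑(p + q) by push_cast; ring,
    Real.Gamma_add_nat_eq_mul_risingFac ha, Real.Gamma_add_nat_eq_mul_risingFac hb,
    Real.Gamma_add_nat_eq_mul_risingFac hab]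
  field_simp

lemma integral_pow_mul_one_sub_pow_of_map_eq_betaMeas {Ω : Type*} [MeasurableSpace Ω]
    {μ : Measure Ω} {X : Ω → ℝ} (hX : AEMeasurable X μ) {a b : ℝ} (ha : 0 < a) (hb : 0 < b)
    (hlaw : μ.map X = betaMeas a b) (p q : ℕ) :
    ∫ ω, X ω ^ p * (1 - X ω) ^ q ∂μ =
      risingFac a p * risingFac b q / risingFac (a + b) (p + q) := by
  rw [← integral_map (f := fun x => x ^ p * (1 - x) ^ q) hX (by fun_prop), hlaw,
    betaMeas_eq_betaMeasure, integral_pow_mul_one_sub_pow_betaMeasure ha hb,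
    beta_add_nat_div_beta ha hb]

section Telescoping

variable {x : ℕ → ℝ} {T : ℕ → ℕ}

lemma prod_range_risingFac_div_risingFac_of_pos (hx : ∀ i, 0 < x i + 1) {j : ℕ}
    (hT : ∀ i ≤ j, 0 < T i) :
    ∏ i ∈ range j, risingFac (x (i + 1)) (T (i + 1)) / risingFac (x i + 1) (T i - 1) =
      (∏ i ∈ range j, x (i + 1)) * risingFac (x j + 1) (T j - 1) /
        risingFac (x 0 + 1) (T 0 - 1) := by
  induction j with
  | zero => simp [(risingFac_pos (hx 0) _).ne']
  | succ j ih =>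
    obtain ⟨m, hm⟩ : ∃ m, T (j + 1) = m + 1 := Nat.exists_eq_add_one.2 (hT (j + 1) le_rfl)
    have := (risingFac_pos (hx j) (T j - 1)).ne'
    have := (risingFac_pos (hx 0) (T 0 - 1)).ne'
    rw [prod_range_succ, prod_range_succ, ih fun i hi => hT i (by omega), hm,
      risingFac_succ_left, Nat.add_sub_cancel]
    field_simp

lemma prod_range_risingFac_div_risingFac (hx : ∀ i, 0 < x i + 1) {k : ℕ} (hTk : T k = 0)
    (hT : ∀ i < k, 0 < T i) :
    ∏ i ∈ range k, risingFac (x (i + 1)) (T (i + 1)) / risingFac (x i + 1) (T i - 1) =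
      (∏ i ∈ range (k - 1), x (i + 1)) / risingFac (x 0 + 1) (T 0 - 1) := by
  rcases k with _ | m
  · simp [hTk]
  · have := (risingFac_pos (hx m) (T m - 1)).ne'
    rw [prod_range_succ, prod_range_risingFac_div_risingFac_of_pos hx fun i hi => hT i (by omega),
      hTk, risingFac_zero, Nat.add_sub_cancel]
    field_simp

end Telescoping

section TailSum

variable {k : ℕ} (lam : Fin k → ℕ)

/-- `tailSum lam m` is the paper's `Λ_{m+1}`, the parts being indexed from `0` here. -/
def tailSum (m : ℕ) : ℕ := ∑ j with m ≤ j.val, lam j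

lemma tailSum_zero : tailSum lam 0 = ∑ j, lam j := by
  simp [tailSum]

lemma tailSum_self : tailSum lam k = 0 := by
  simp [tailSum]

lemma tailSum_eq_add (i : Fin k) : tailSum lam i = lam i + tailSum lam (i + 1) := by
  have hsplit : univ.filter (fun j : Fin k => (i : ℕ) ≤ j) =
      insert i (univ.filter fun j : Fin k => (i : ℕ) + 1 ≤ j) := by
    ext j
    simp only [mem_filter, mem_univ, true_and, mem_insert, Fin.ext_iff]
    omega
  rw [tailSum, tailSum, hsplit, sum_insert (by simp)]

lemma sum_Ioi_eq_tailSum (i : Fin k) : ∑ j ∈ Ioi i, lam j = tailSum lam (i + 1) := by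
  rw [tailSum]
  congr 1
  ext j
  simp only [mem_Ioi, mem_filter, mem_univ, true_and, Fin.lt_def]
  omega

lemma tailSum_pos {lam : Fin k → ℕ} (hlam : ∀ j, 0 < lam j) {m : ℕ} (hm : m < k) :
    0 < tailSum lam m := by
  have := tailSum_eq_add lam ⟨m, hm⟩
  have := hlam ⟨m, hm⟩
  simp_all

end TailSum

/-- `W i` is the paper's `W_{i+1}`. -/
theorem stick_breaking_moment_formula
    {Ω : Type*} [MeasurableSpace Ω] (μ : Measure Ω) [IsProbabilityMeasure μ]
    (α θ : ℝ) (hα0 : 0 ≤ α) (hα1 : α < 1) (hθ : -α < θ)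
    (W : ℕ → Ω → ℝ) (hWm : ∀ i, Measurable (W i))
    (hindep : ProbabilityTheory.iIndepFun W μ)
    (hlaw : ∀ i : ℕ, Measure.map (W i) μ = betaMeas (1 - α) (θ + (i + 1) * α))
    (k : ℕ) (lam : Fin k → ℕ) (hpos : ∀ j, 0 < lam j) :
    ∫ ω, ∏ i : Fin k,
        (W i ω) ^ (lam i - 1) * (1 - W i ω) ^ (∑ j ∈ Finset.Ioi i, lam j) ∂μ =
      (∏ i ∈ Finset.range (k - 1), (θ + (i + 1) * α)) /
          risingFac (θ + 1) ((∑ j, lam j) - 1) *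
        ∏ j, risingFac (1 - α) (lam j - 1) := by
  set x : ℕ → ℝ := fun i => θ + i * α with hx_def
  have hx : ∀ i, 0 < x i + 1 := fun i => by
    have : 0 ≤ (i : ℝ) * α := by positivity
    simp only [hx_def]; linarith
  have hmoment : ∀ i : Fin k,
      ∫ ω, W i ω ^ (lam i - 1) * (1 - W i ω) ^ (∑ j ∈ Ioi i, lam j) ∂μ =
        risingFac (1 - α) (lam i - 1) *
          (risingFac (x (i + 1)) (tailSum lam (i + 1)) /
            risingFac (x i + 1) (tailSum lam i - 1)) := fun i => by
    have hdeg : lam i - 1 + tailSum lam (i + 1) = tailSum lam i - 1 := by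
      have := hpos i
      rw [tailSum_eq_add lam i]
      omega
    rw [integral_pow_mul_one_sub_pow_of_map_eq_betaMeas (hWm i).aemeasurable (by linarith)
      (by nlinarith) (hlaw i), sum_Ioi_eq_tailSum, hdeg, mul_div_assoc]
    simp only [hx_def]
    push_cast
    ring_nf
  rw [(hindep.precomp Fin.val_injective).integral_fun_prod_comp
      (f := fun i y => y ^ (lam i - 1) * (1 - y) ^ (∑ j ∈ Ioi i, lam j))
      (fun i => (hWm i).aemeasurable) (fun i => by fun_prop),
    prod_congr rfl fun i _ => hmoment i, prod_mul_distrib,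
    Fin.prod_univ_eq_prod_range (fun i => risingFac (x (i + 1)) (tailSum lam (i + 1)) /
      risingFac (x i + 1) (tailSum lam i - 1)),
    prod_range_risingFac_div_risingFac hx (tailSum_self lam) fun i hi => tailSum_pos hpos hi,
    tailSum_zero]
  simp only [hx_def, Nat.cast_succ, Nat.cast_zero, zero_mul, add_zero]
  ring
end
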